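/- arXiv:2306.14926 — 2 statements merged into one kernel-verified Lean document; each statement's English description precedes it below -/
import Mathlib

section
/- Let M be a real square Metzler matrix (all off-diagonal entries nonnegative) written in block form M = [[A, B], [C, D]] where A and D are square and A is invertible. Then M is Metzler stable (all eigenvalues have negative real part) if and only if A and the Schur complement D - C A⁻¹ B are both Metzler stable. -/
/-!
For a Metzler matrix `N`, Hurwitz stability is equivalent to `N` being invertible with
`N⁻¹ ≤ 0` entrywise. If `N` is stable, then for small `t > 0` the matrix `X = 1 + t N` is
nonnegative with spectrum in the open unit disc, so by Gelfand's formula the Neumann series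
`∑ Xᵏ = (1 - X)⁻¹ = -(t N)⁻¹` converges, and its sum is nonnegative. Conversely, if `-N⁻¹ ≥ 0`
then `v = -N⁻¹ 1` is a positive vector with `N v < 0`, and Gershgorin's theorem applied to
`diag(v)⁻¹ N diag(v)` puts the spectrum in the open left half-plane.

For `M = [[A, B], [C, D]]` Metzler, a positive vector `v` with `M v < 0` restricts to one for
`A`, since `B ≥ 0`; and once `A⁻¹ ≤ 0`, the Schur complement `D - C A⁻¹ B` is Metzler and the
block formula for `M⁻¹` shows that `M⁻¹ ≤ 0` if and only if `(D - C A⁻¹ B)⁻¹ ≤ 0`.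
-/

open Matrix Filter Topology

theorem summable_norm_pow_of_spectralRadius_lt_one {A : Type*} [NormedRing A]
    [NormedAlgebra ℂ A] [CompleteSpace A] {a : A} (ha : spectralRadius ℂ a < 1) :
    Summable fun n => ‖a ^ n‖ := by
  obtain ⟨t, hρt, ht1⟩ := ENNReal.lt_iff_exists_nnreal_btwn.1 ha
  refine Summable.of_norm_bounded_eventually_nat
    (summable_geometric_of_lt_one t.2 (by exact_mod_cast ht1)) ?_
  filter_upwards [(spectrum.pow_nnnorm_pow_one_div_tendsto_nhds_spectralRadius a).eventually
    (gt_mem_nhds hρt), eventually_gt_atTop 0] with n hn hn0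
  rw [one_div, ENNReal.rpow_inv_lt_iff (by positivity), ENNReal.rpow_natCast, ← ENNReal.coe_pow,
    ENNReal.coe_lt_coe] at hn
  rw [norm_norm]
  exact_mod_cast hn.le

theorem eventually_norm_one_add_mul_lt_one {μ : ℂ} (hμ : μ.re < 0) :
    ∀ᶠ t : ℝ in 𝓝[>] 0, ‖1 + (t : ℂ) * μ‖ < 1 := by
  have hlim : Tendsto (fun t : ℝ => t * Complex.normSq μ + 2 * μ.re) (𝓝[>] 0)
      (𝓝 (0 * Complex.normSq μ + 2 * μ.re)) :=
    (((continuous_id.mul continuous_const).add continuous_const).tendsto 0).mono_left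
      nhdsWithin_le_nhds
  filter_upwards [self_mem_nhdsWithin,
    hlim.eventually (gt_mem_nhds (show _ < (0 : ℝ) by linarith))] with t (ht : 0 < t) hneg
  rw [Complex.normSq_apply] at hneg
  rw [← sq_lt_one_iff₀ (norm_nonneg _), Complex.sq_norm, Complex.normSq_apply]
  simp only [Complex.add_re, Complex.one_re, Complex.mul_re, Complex.ofReal_re, Complex.ofReal_im,
    zero_mul, sub_zero, Complex.add_im, Complex.one_im, Complex.mul_im, zero_add]
  nlinarith [mul_neg_of_pos_of_neg ht hneg]

namespace Matrix

variable {l m n : Type*}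

def IsNonneg (X : Matrix m n ℝ) : Prop := ∀ i j, 0 ≤ X i j

def IsMetzler (N : Matrix n n ℝ) : Prop := ∀ i j, i ≠ j → 0 ≤ N i j

def IsHurwitzStable [Fintype n] [DecidableEq n] (N : Matrix n n ℝ) : Prop :=
  ∀ μ ∈ spectrum ℂ (N.map Complex.ofReal), μ.re < 0

section IsNonneg

theorem IsNonneg.mul [Fintype m] {X : Matrix l m ℝ} {Y : Matrix m n ℝ} (hX : IsNonneg X)
    (hY : IsNonneg Y) : IsNonneg (X * Y) := fun i j =>
  Finset.sum_nonneg fun k _ => mul_nonneg (hX i k) (hY k j)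

theorem IsNonneg.add {X Y : Matrix m n ℝ} (hX : IsNonneg X) (hY : IsNonneg Y) :
    IsNonneg (X + Y) := fun i j => add_nonneg (hX i j) (hY i j)

theorem isNonneg_one [DecidableEq n] : IsNonneg (1 : Matrix n n ℝ) := fun i j => by
  rcases eq_or_ne i j with rfl | h
  · simp
  · simp [one_apply_ne h]

theorem IsNonneg.pow [Fintype n] [DecidableEq n] {X : Matrix n n ℝ} (hX : IsNonneg X) :
    ∀ k : ℕ, IsNonneg (X ^ k)
  | 0 => by rw [pow_zero]; exact isNonneg_one
  | k + 1 => by rw [pow_succ]; exact (hX.pow k).mul hX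

theorem IsNonneg.fromBlocks {A : Matrix m m ℝ} {B : Matrix m n ℝ} {C : Matrix n m ℝ}
    {D : Matrix n n ℝ} (hA : IsNonneg A) (hB : IsNonneg B) (hC : IsNonneg C) (hD : IsNonneg D) :
    IsNonneg (fromBlocks A B C D) := by
  rintro (i | i) (j | j)
  exacts [hA i j, hB i j, hC i j, hD i j]

end IsNonneg

section IsMetzler

variable {A : Matrix m m ℝ} {B : Matrix m n ℝ} {C : Matrix n m ℝ} {D : Matrix n n ℝ}

theorem IsMetzler.fromBlocks₁₁ (h : IsMetzler (fromBlocks A B C D)) : IsMetzler A :=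
  fun i j hij => h (.inl i) (.inl j) (Sum.inl_injective.ne hij)

theorem IsMetzler.fromBlocks₁₂ (h : IsMetzler (fromBlocks A B C D)) : IsNonneg B :=
  fun i j => h (.inl i) (.inr j) Sum.inl_ne_inr

theorem IsMetzler.fromBlocks₂₁ (h : IsMetzler (fromBlocks A B C D)) : IsNonneg C :=
  fun i j => h (.inr i) (.inl j) Sum.inr_ne_inl

theorem IsMetzler.fromBlocks₂₂ (h : IsMetzler (fromBlocks A B C D)) : IsMetzler D :=
  fun i j hij => h (.inr i) (.inr j) (Sum.inr_injective.ne hij)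

theorem IsMetzler.sub_mul_mul [Fintype m] (hD : IsMetzler D) (hC : IsNonneg C)
    {P : Matrix m m ℝ} (hP : IsNonneg (-P)) (hB : IsNonneg B) : IsMetzler (D - C * P * B) := by
  intro i j hij
  have h := (hC.mul hP).mul hB i j
  rw [Matrix.mul_neg, Matrix.neg_mul, neg_apply] at h
  rw [sub_apply]
  linarith [hD i j hij]

end IsMetzler

section SchurComplement

variable {α : Type*} [CommRing α] [Fintype m] [DecidableEq m] [Fintype n] [DecidableEq n]
  {A : Matrix m m α} {B : Matrix m n α} {C : Matrix n m α} {D : Matrix n n α}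

theorem isUnit_fromBlocks_iff_of_isUnit (hA : IsUnit A) :
    IsUnit (fromBlocks A B C D) ↔ IsUnit (D - C * A⁻¹ * B) := by
  obtain ⟨_⟩ := hA.nonempty_invertible
  rw [isUnit_fromBlocks_iff_of_invertible₁₁, invOf_eq_nonsing_inv]

theorem inv_fromBlocks_eq_of_isUnit (hA : IsUnit A) (hS : IsUnit (D - C * A⁻¹ * B)) :
    (fromBlocks A B C D)⁻¹ =
      fromBlocks (A⁻¹ + A⁻¹ * B * (D - C * A⁻¹ * B)⁻¹ * C * A⁻¹)
        (-(A⁻¹ * B * (D - C * A⁻¹ * B)⁻¹)) (-((D - C * A⁻¹ * B)⁻¹ * C * A⁻¹))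
        (D - C * A⁻¹ * B)⁻¹ := by
  obtain ⟨_⟩ := hA.nonempty_invertible
  have hM := (isUnit_fromBlocks_iff_of_isUnit (B := B) (C := C) (D := D) hA).2 hS
  rw [← invOf_eq_nonsing_inv A] at hS ⊢
  obtain ⟨_⟩ := hS.nonempty_invertible
  obtain ⟨_⟩ := hM.nonempty_invertible
  simp only [← invOf_eq_nonsing_inv, invOf_fromBlocks₁₁_eq]

end SchurComplement

section HurwitzStable

variable [Fintype n] [DecidableEq n]

theorem IsMetzler.isHurwitzStable_of_mulVec_neg {N : Matrix n n ℝ} (hN : IsMetzler N)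
    {v : n → ℝ} (hv : ∀ i, 0 < v i) (hNv : ∀ i, (N *ᵥ v) i < 0) : IsHurwitzStable N := by
  intro μ hμ
  have hv_ne : ∀ i, (v i : ℂ) ≠ 0 := fun i => Complex.ofReal_ne_zero.2 (hv i).ne'
  let V : (Matrix n n ℂ)ˣ :=
    ⟨diagonal fun i => (v i : ℂ), diagonal fun i => (v i : ℂ)⁻¹,
      by simp [diagonal_mul_diagonal, hv_ne], by simp [diagonal_mul_diagonal, hv_ne]⟩
  set W : Matrix n n ℂ := (↑V⁻¹ : Matrix n n ℂ) * N.map Complex.ofReal * (↑V : Matrix n n ℂ)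
    with hWdef
  have hW : μ ∈ spectrum ℂ W := by rwa [hWdef, spectrum.units_conjugate']
  obtain ⟨k, hk⟩ := eigenvalue_mem_ball (A := W)
    (Module.End.hasEigenvalue_iff_mem_spectrum.2 ((spectrum_toLin' W).symm ▸ hW))
  have hentry : ∀ i j, W i j = ((N i j * v j / v i : ℝ) : ℂ) := by
    intro i j
    simp only [hWdef, V, Units.inv_mk, Units.val_mk, mul_diagonal, diagonal_mul, map_apply,
      Complex.ofReal_div, Complex.ofReal_mul]
    ring
  have hrow : ∑ j ∈ Finset.univ.erase k, N k j * v j / v k < -N k k := by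
    have h := hNv k
    rw [mulVec, dotProduct, ← Finset.add_sum_erase _ _ (Finset.mem_univ k)] at h
    rw [← Finset.sum_div, div_lt_iff₀ (hv k)]
    linarith
  have hradius : ∑ j ∈ Finset.univ.erase k, ‖W k j‖ =
      ∑ j ∈ Finset.univ.erase k, N k j * v j / v k := by
    refine Finset.sum_congr rfl fun j hj => ?_
    rw [hentry, Complex.norm_real, Real.norm_of_nonneg]
    exact div_nonneg (mul_nonneg (hN k j (Finset.ne_of_mem_erase hj).symm) (hv j).le) (hv k).le
  rw [mem_closedBall_iff_norm, hradius, hentry, mul_div_cancel_right₀ _ (hv k).ne'] at hk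
  have hre : μ.re - N k k ≤ ‖μ - (N k k : ℂ)‖ := by
    simpa using Complex.re_le_norm (μ - N k k)
  linarith

theorem IsMetzler.exists_pos_mulVec_neg {N : Matrix n n ℝ} (hN : IsMetzler N) (hU : IsUnit N)
    (hinv : IsNonneg (-N⁻¹)) : ∃ v : n → ℝ, (∀ i, 0 < v i) ∧ ∀ i, (N *ᵥ v) i < 0 := by
  set v := -N⁻¹ *ᵥ 1 with hv
  have hNv : N *ᵥ v = -1 := by
    rw [hv, mulVec_mulVec, mul_neg, mul_nonsing_inv _ ((isUnit_iff_isUnit_det _).1 hU),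
      neg_mulVec, one_mulVec]
  have hv0 : ∀ j, 0 ≤ v j := fun j =>
    Finset.sum_nonneg fun k _ => mul_nonneg (hinv j k) zero_le_one
  refine ⟨v, fun i => (hv0 i).lt_of_ne fun hvi => ?_, fun i => by simp [hNv]⟩
  have h := congrFun hNv i
  rw [mulVec, dotProduct, ← Finset.add_sum_erase _ _ (Finset.mem_univ i), ← hvi, mul_zero,
    zero_add, Pi.neg_apply, Pi.one_apply] at h
  have hoff : 0 ≤ ∑ j ∈ Finset.univ.erase i, N i j * v j :=
    Finset.sum_nonneg fun j hj => mul_nonneg (hN i j (Finset.ne_of_mem_erase hj).symm) (hv0 j)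
  linarith

theorem IsHurwitzStable.exists_isNonneg_one_add_smul {N : Matrix n n ℝ} (hN : IsMetzler N)
    (hst : IsHurwitzStable N) : ∃ t : ℝ, 0 < t ∧ IsNonneg (1 + t • N) ∧
      ∀ z ∈ spectrum ℂ ((1 + t • N).map Complex.ofReal), ‖z‖ < 1 := by
  have hdiag : ∀ᶠ t in 𝓝[>] (0 : ℝ), ∀ i, 0 ≤ 1 + t * N i i := by
    refine eventually_all.2 fun i => ?_
    have hlim : Tendsto (fun t : ℝ => 1 + t * N i i) (𝓝[>] 0) (𝓝 (1 + 0 * N i i)) :=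
      ((continuous_const.add (continuous_id.mul continuous_const)).tendsto 0).mono_left
        nhdsWithin_le_nhds
    exact (hlim.eventually (lt_mem_nhds (by simp))).mono fun _ h => h.le
  have hspec := (Matrix.finite_spectrum (N.map Complex.ofReal)).eventually_all.2
    fun μ hμ => eventually_norm_one_add_mul_lt_one (hst μ hμ)
  obtain ⟨t, ht, hdiag, hspec⟩ := (eventually_mem_nhdsWithin.and (hdiag.and hspec)).exists
  refine ⟨t, ht, fun i j => ?_, ?_⟩
  · rcases eq_or_ne i j with rfl | hij
    · simpa using hdiag i
    · simpa [one_apply_ne hij] using mul_nonneg (le_of_lt ht) (hN i j hij)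
  · have ht' : (t : ℂ) ≠ 0 := Complex.ofReal_ne_zero.2 (ne_of_gt ht)
    have hmap : (1 + t • N).map Complex.ofReal
        = algebraMap ℂ _ 1 + (Units.mk0 (t : ℂ) ht') • N.map Complex.ofReal := by
      ext i j
      rcases eq_or_ne i j with rfl | hij
      · simp
      · simp [one_apply_ne hij]
    rw [hmap, ← spectrum.singleton_add_eq, spectrum.unit_smul_eq_smul]
    rintro _ ⟨_, rfl, _, ⟨μ, hμ, rfl⟩, rfl⟩
    exact hspec μ hμ

section Neumann

attribute [local instance] Matrix.frobeniusNormedRing Matrix.frobeniusNormedAlgebra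

theorem exists_isNonneg_one_sub_mul_eq_one {X : Matrix n n ℝ} (hX : IsNonneg X)
    (hσ : ∀ z ∈ spectrum ℂ (X.map Complex.ofReal), ‖z‖ < 1) :
    ∃ T, (1 - X) * T = 1 ∧ IsNonneg T := by
  have hρ : spectralRadius ℂ (X.map Complex.ofReal) < 1 := by
    rcases isEmpty_or_nonempty n with hn | hn
    · simp [spectralRadius, spectrum.of_subsingleton]
    · exact_mod_cast spectrum.spectralRadius_lt_of_forall_lt _ fun z hz =>
        (by exact_mod_cast hσ z hz : ‖z‖₊ < 1)
  have hsum : Summable fun k => X ^ k := by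
    have hnorm : ∀ k, ‖(X.map Complex.ofReal) ^ k‖ = ‖X ^ k‖ := fun k => by
      rw [← frobenius_norm_map_eq (X ^ k) Complex.ofReal Complex.norm_real]
      exact congrArg norm (Matrix.map_pow X Complex.ofRealHom k).symm
    exact .of_norm (by simpa only [hnorm] using summable_norm_pow_of_spectralRadius_lt_one hρ)
  refine ⟨∑' k, X ^ k, hsum.one_sub_mul_tsum_pow, fun i j => ?_⟩
  exact (Pi.hasSum.1 (Pi.hasSum.1 hsum.hasSum i) j).nonneg fun k => hX.pow k i j

end Neumann

theorem IsHurwitzStable.isUnit_and_isNonneg_neg_inv {N : Matrix n n ℝ} (hN : IsMetzler N)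
    (hst : IsHurwitzStable N) : IsUnit N ∧ IsNonneg (-N⁻¹) := by
  obtain ⟨t, ht, hX, hσ⟩ := hst.exists_isNonneg_one_add_smul hN
  obtain ⟨T, hT, hT0⟩ := exists_isNonneg_one_sub_mul_eq_one hX hσ
  have hNT : N * -(t • T) = 1 := by
    rw [← hT, sub_add_cancel_left, Matrix.neg_mul, Matrix.mul_neg, Matrix.smul_mul,
      Matrix.mul_smul]
  refine ⟨(isUnit_iff_isUnit_det N).2 (isUnit_det_of_right_inverse hNT), fun i j => ?_⟩
  rw [inv_eq_right_inv hNT, neg_neg, smul_apply, smul_eq_mul]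
  exact mul_nonneg ht.le (hT0 i j)

theorem IsMetzler.isHurwitzStable_iff {N : Matrix n n ℝ} (hN : IsMetzler N) :
    IsHurwitzStable N ↔ IsUnit N ∧ IsNonneg (-N⁻¹) := by
  refine ⟨fun hst => hst.isUnit_and_isNonneg_neg_inv hN, fun ⟨hU, hinv⟩ => ?_⟩
  obtain ⟨v, hv, hNv⟩ := hN.exists_pos_mulVec_neg hU hinv
  exact hN.isHurwitzStable_of_mulVec_neg hv hNv

variable [Fintype m] [DecidableEq m] {A : Matrix m m ℝ} {B : Matrix m n ℝ} {C : Matrix n m ℝ}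
  {D : Matrix n n ℝ}

theorem IsHurwitzStable.fromBlocks₁₁ (hM : IsMetzler (fromBlocks A B C D))
    (hst : IsHurwitzStable (fromBlocks A B C D)) : IsHurwitzStable A := by
  obtain ⟨hU, hinv⟩ := hM.isHurwitzStable_iff.1 hst
  obtain ⟨v, hv, hMv⟩ := hM.exists_pos_mulVec_neg hU hinv
  refine hM.fromBlocks₁₁.isHurwitzStable_of_mulVec_neg (v := v ∘ Sum.inl) (fun i => hv _)
    fun i => ?_
  have h := hMv (.inl i)
  rw [fromBlocks_mulVec, Sum.elim_inl, Pi.add_apply] at h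
  have hBv : 0 ≤ (B *ᵥ (v ∘ Sum.inr)) i :=
    Finset.sum_nonneg fun j _ => mul_nonneg (hM.fromBlocks₁₂ i j) (hv _).le
  linarith

theorem isNonneg_neg_inv_fromBlocks (hA : IsUnit A) (hS : IsUnit (D - C * A⁻¹ * B))
    (hPA : IsNonneg (-A⁻¹)) (hB : IsNonneg B) (hC : IsNonneg C)
    (hPS : IsNonneg (-(D - C * A⁻¹ * B)⁻¹)) : IsNonneg (-(fromBlocks A B C D)⁻¹) := by
  have hPBQ := (hPA.mul hB).mul hPS
  have hQCP := (hPS.mul hC).mul hPA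
  rw [inv_fromBlocks_eq_of_isUnit hA hS, fromBlocks_neg, neg_neg, neg_neg]
  refine .fromBlocks ?_ (by simpa [Matrix.mul_assoc] using hPBQ)
    (by simpa [Matrix.mul_assoc] using hQCP) hPS
  simpa [Matrix.mul_assoc, neg_add, add_comm] using hPA.add ((hPBQ.mul hC).mul hPA)

end HurwitzStable

end Matrix

theorem metzler_block_stability_general {m n : Type*} [Fintype m] [Fintype n]
    [DecidableEq m] [DecidableEq n]
    (A : Matrix m m ℝ) (B : Matrix m n ℝ) (C : Matrix n m ℝ) (D : Matrix n n ℝ)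
    (hMetzler : ∀ i j, i ≠ j → 0 ≤ (Matrix.fromBlocks A B C D) i j) :
    ((∀ μ ∈ spectrum ℂ ((Matrix.fromBlocks A B C D).map (Complex.ofReal)),
        μ.re < 0) ↔
      ((∀ μ ∈ spectrum ℂ (A.map (Complex.ofReal)), μ.re < 0) ∧
       (∀ μ ∈ spectrum ℂ ((D - C * A⁻¹ * B).map (Complex.ofReal)), μ.re < 0))) := by
  have hM : IsMetzler (fromBlocks A B C D) := hMetzler
  have hSM (hPA : IsNonneg (-A⁻¹)) : IsMetzler (D - C * A⁻¹ * B) :=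
    hM.fromBlocks₂₂.sub_mul_mul hM.fromBlocks₂₁ hPA hM.fromBlocks₁₂
  change IsHurwitzStable _ ↔ IsHurwitzStable A ∧ IsHurwitzStable _
  constructor
  · intro hst
    have hAst := hst.fromBlocks₁₁ hM
    obtain ⟨hUA, hPA⟩ := hM.fromBlocks₁₁.isHurwitzStable_iff.1 hAst
    obtain ⟨hUM, hPM⟩ := hM.isHurwitzStable_iff.1 hst
    have hUS := (isUnit_fromBlocks_iff_of_isUnit hUA).1 hUM
    refine ⟨hAst, (hSM hPA).isHurwitzStable_iff.2 ⟨hUS, fun i j => ?_⟩⟩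
    simpa [inv_fromBlocks_eq_of_isUnit hUA hUS] using hPM (.inr i) (.inr j)
  · rintro ⟨hAst, hSst⟩
    obtain ⟨hUA, hPA⟩ := hM.fromBlocks₁₁.isHurwitzStable_iff.1 hAst
    obtain ⟨hUS, hPS⟩ := (hSM hPA).isHurwitzStable_iff.1 hSst
    exact hM.isHurwitzStable_iff.2 ⟨(isUnit_fromBlocks_iff_of_isUnit hUA).2 hUS,
      isNonneg_neg_inv_fromBlocks hUA hUS hPA hM.fromBlocks₁₂ hM.fromBlocks₂₁ hPS⟩

/-- Kamgang–Sallet block criterion: a Metzler matrix `M = [[A, B], [C, D]]` with `A`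
invertible is Metzler stable (all eigenvalues with negative real part) iff `A` and
the Schur complement `D - C A⁻¹ B` are both Metzler stable. -/
theorem metzler_block_stability {m n : Type*} [Fintype m] [Fintype n]
    [DecidableEq m] [DecidableEq n]
    (A : Matrix m m ℝ) (B : Matrix m n ℝ) (C : Matrix n m ℝ) (D : Matrix n n ℝ)
    (hMetzler : ∀ i j, i ≠ j → 0 ≤ (Matrix.fromBlocks A B C D) i j)
    (hA : IsUnit A) :
    ((∀ μ ∈ spectrum ℂ ((Matrix.fromBlocks A B C D).map (Complex.ofReal)),
        μ.re < 0) ↔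
      ((∀ μ ∈ spectrum ℂ (A.map (Complex.ofReal)), μ.re < 0) ∧
       (∀ μ ∈ spectrum ℂ ((D - C * A⁻¹ * B).map (Complex.ofReal)), μ.re < 0))) :=
  metzler_block_stability_general A B C D hMetzler
end

section
/- Let f_q, f_r ∈ (0,1) with f_q f_r < 1, let r_suc, δ, Γ > 0, and ℓ a natural number. Suppose positive reals I_q, I_r, E_r^{(ℓ+1)}, S_q satisfy: I_r = (r_suc f_r/δ) I_q, E_r^{(ℓ+1)} = (r_suc (1 - f_q f_r)/(δ f_q)) I_q, and S_q + I_q/(f_q f_r)^ℓ = f_q Γ/(r_suc(1 - f_q f_r)). If additionally δ E_r^{(ℓ+1)} = f_r (f_r f_q)^ℓ S_q r_inf with r_inf ≤ r_max < r_suc for some positive r_max, then I_q < Γ f_q (f_r f_q)^{ℓ+1} / (r_suc (1 - f_q f_r)). -/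
set_option maxHeartbeats 1000000 in
/-- Upper bound on the infectious questing vector component of the endemic
equilibrium: under the steady-state relations of the vector subsystem and
`r_inf ≤ r_max < r_suc`, one has
`I_q < Γ f_q (f_r f_q)^{ℓ+1} / (r_suc (1 - f_q f_r))`. -/
theorem endemic_Iq_upper_bound (fq fr rsuc δ Γ : ℝ) (ℓ : ℕ)
    (hfq : fq ∈ Set.Ioo (0:ℝ) 1) (hfr : fr ∈ Set.Ioo (0:ℝ) 1)
    (hprod : fq * fr < 1)
    (hrsuc : 0 < rsuc) (hδ : 0 < δ) (hΓ : 0 < Γ)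
    (Iq Ir Er Sq rinf rmax : ℝ)
    (hIq : 0 < Iq) (hIr : 0 < Ir) (hEr : 0 < Er) (hSq : 0 < Sq)
    (h1 : Ir = (rsuc * fr / δ) * Iq)
    (h2 : Er = (rsuc * (1 - fq * fr) / (δ * fq)) * Iq)
    (h3 : Sq + Iq / (fq * fr) ^ ℓ = fq * Γ / (rsuc * (1 - fq * fr)))
    (h4 : δ * Er = fr * (fr * fq) ^ ℓ * Sq * rinf)
    (hrmax : 0 < rmax) (hinf : rinf ≤ rmax) (hmax : rmax < rsuc) :
    Iq < Γ * fq * (fr * fq) ^ (ℓ + 1) / (rsuc * (1 - fq * fr)) := by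
  obtain ⟨hfq0, hfq1⟩ := hfq
  obtain ⟨hfr0, hfr1⟩ := hfr
  have h1m : 0 < 1 - fq * fr := by linarith
  set P : ℝ := (fq * fr) ^ ℓ with hPdef
  have hP : 0 < P := pow_pos (by positivity) ℓ
  have hcomm : (fr * fq) ^ ℓ = P := by rw [hPdef, mul_comm]
  -- rinf > 0
  have hrinf : 0 < rinf := by
    by_contra h
    push_neg at h
    have hle : fr * (fr * fq) ^ ℓ * Sq * rinf ≤ 0 := by
      have : (0:ℝ) ≤ fr * (fr * fq) ^ ℓ * Sq := by positivity
      exact mul_nonpos_of_nonneg_of_nonpos this h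
    nlinarith [mul_pos hδ hEr]
  have hrs : rinf < rsuc := lt_of_le_of_lt hinf hmax
  -- key equation: rsuc*(1-fq*fr)*Iq = fq * (fr * P * Sq * rinf)
  have hk : rsuc * (1 - fq * fr) * Iq = fq * (fr * P * Sq * rinf) := by
    have := h4
    rw [h2, hcomm] at this
    field_simp at this
    nlinarith [this]
  -- h3 cleared of denominators
  have h3' : (Sq * P + Iq) * (rsuc * (1 - fq * fr)) = fq * Γ * P := by
    have h3' := h3
    field_simp at h3'
    nlinarith [h3']
  rw [lt_div_iff₀ (by positivity)]
  have hexp : (fr * fq) ^ (ℓ + 1) = fr * fq * P := by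
    rw [pow_succ, hcomm]; ring
  rw [hexp]
  have step1 : Γ * fq * (fr * fq * P) = fr * fq * ((Sq * P + Iq) * (rsuc * (1 - fq * fr))) := by
    rw [h3']; ring
  rw [step1]
  have h5 : rinf * ((1 - fq * fr) * Iq) < rinf * (fq * (fr * P * Sq)) := by
    rw [show rinf * (fq * (fr * P * Sq)) = fq * (fr * P * Sq * rinf) by ring, ← hk]
    nlinarith [mul_pos h1m hIq]
  have hKey : (1 - fq * fr) * Iq < fq * (fr * P * Sq) := lt_of_mul_lt_mul_left h5 hrinf.le
  have hred : Iq < fr * fq * (Sq * P + Iq) := by nlinarith [hKey]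
  calc Iq * (rsuc * (1 - fq * fr)) < fr * fq * (Sq * P + Iq) * (rsuc * (1 - fq * fr)) := by
        exact mul_lt_mul_of_pos_right hred (by positivity)
    _ = fr * fq * ((Sq * P + Iq) * (rsuc * (1 - fq * fr))) := by ring
end
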